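/- arXiv:1711.07023 — 5 statements merged into one kernel-verified Lean document; each statement's English description precedes it below -/
import Mathlib

section
/- Let R, x₀ be covered by alphabet Σ with a₀ ∈ Σ, and let P := R ∪ {[a;a₀]/[a₀] | a ∈ Σ} ∪ {[a₀;a]/[a₀] | a ∈ Σ}. If a₀ ∈ x and x ⊆ Σ, then x ≻*_P [a₀]. -/
abbrev Card := List ℕ × List ℕ

def tau1 : List Card → List ℕ
  | [] => []
  | c :: A => c.1 ++ tau1 A

def tau2 : List Card → List ℕ
  | [] => []
  | c :: A => c.2 ++ tau2 A

inductive Rew (R : List Card) : List ℕ → List ℕ → Prop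
  | step (u v l r : List ℕ) : (l, r) ∈ R → Rew R (u ++ l ++ v) (u ++ r ++ v)

def Rewt (R : List Card) : List ℕ → List ℕ → Prop :=
  Relation.ReflTransGen (Rew R)

theorem x_rewt_a0 (R : List Card) (x₀ : List ℕ) (a₀ : ℕ) (Sig : List ℕ)
    (hR : ∀ c ∈ R, c.1 ⊆ Sig ∧ c.2 ⊆ Sig) (hx₀ : x₀ ⊆ Sig) (ha₀ : a₀ ∈ Sig)
    (P : List Card)
    (hP : P = R ++ Sig.map (fun a => ([a, a₀], [a₀])) ++ Sig.map (fun a => ([a₀, a], [a₀])))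
    (x : List ℕ) (hax : a₀ ∈ x) (hxS : x ⊆ Sig) :
    Rewt P x [a₀] := by
  have hleft : ∀ a ∈ Sig, ([a, a₀], [a₀]) ∈ P := by
    intro a ha; subst hP
    simp only [List.mem_append, List.mem_map]
    exact Or.inl (Or.inr ⟨a, ha, rfl⟩)
  have hright : ∀ a ∈ Sig, ([a₀, a], [a₀]) ∈ P := by
    intro a ha; subst hP
    simp only [List.mem_append, List.mem_map]
    exact Or.inr ⟨a, ha, rfl⟩
  obtain ⟨u, v, rfl⟩ := List.append_of_mem hax
  have hu : u ⊆ Sig := fun b hb => hxS (by simp [hb])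
  have hv : v ⊆ Sig := fun b hb => hxS (by simp [hb])
  have step1 : ∀ u : List ℕ, u ⊆ Sig → ∀ w, Rewt P (u ++ a₀ :: w) (a₀ :: w) := by
    intro u
    induction u using List.reverseRecOn with
    | nil => intro _ w; simp; exact Relation.ReflTransGen.refl
    | append_singleton u' a ih =>
      intro hsub w
      have ha : a ∈ Sig := hsub (by simp)
      have h1 : Rew P (u' ++ [a, a₀] ++ w) (u' ++ [a₀] ++ w) :=
        Rew.step u' w [a, a₀] [a₀] (hleft a ha)
      have h2 : Rewt P (u' ++ a₀ :: w) (a₀ :: w) :=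
        ih (fun b hb => hsub (by simp [hb])) w
      refine Relation.ReflTransGen.head ?_ h2
      simpa using h1
  have step2 : ∀ v : List ℕ, v ⊆ Sig → Rewt P (a₀ :: v) [a₀] := by
    intro v
    induction v with
    | nil => intro _; exact Relation.ReflTransGen.refl
    | cons a v' ih =>
      intro hsub
      have ha : a ∈ Sig := hsub (by simp)
      have h1 : Rew P ([] ++ [a₀, a] ++ v') ([] ++ [a₀] ++ v') :=
        Rew.step [] v' [a₀, a] [a₀] (hright a ha)
      have h2 : Rewt P (a₀ :: v') [a₀] := ih (fun b hb => hsub (by simp [hb]))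
      refine Relation.ReflTransGen.head ?_ h2
      simpa using h1
  exact (step1 u hu v).trans (step2 v hv)
end

section
/- SRH reduces to SR: for R, x₀, a₀ with Σ covering R, x₀, a₀, defining P := R ∪ {[a;a₀]/[a₀] | a∈Σ} ∪ {[a₀;a]/[a₀] | a∈Σ}, we have (∃ y, x₀ ≻*_R y ∧ a₀ ∈ y) ↔ x₀ ≻*_P [a₀]. -/
lemma Rew.context {P : List Card} {s t : List ℕ} (w v : List ℕ) (h : Rew P s t) :
    Rew P (w ++ s ++ v) (w ++ t ++ v) := by
  cases h with
  | step u v' l r hm =>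
    have h1 : w ++ (u ++ l ++ v') ++ v = (w ++ u) ++ l ++ (v' ++ v) := by simp
    have h2 : w ++ (u ++ r ++ v') ++ v = (w ++ u) ++ r ++ (v' ++ v) := by simp
    rw [h1, h2]
    exact Rew.step _ _ _ _ hm

lemma Rewt.context {P : List Card} {s t : List ℕ} (w v : List ℕ) (h : Rewt P s t) :
    Rewt P (w ++ s ++ v) (w ++ t ++ v) := by
  induction h with
  | refl => exact Relation.ReflTransGen.refl
  | tail _ hst ih => exact ih.tail (hst.context w v)

lemma Rewt_mono {R P : List Card} (hsub : ∀ c ∈ R, c ∈ P) {s t : List ℕ}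
    (h : Rewt R s t) : Rewt P s t := by
  induction h with
  | refl => exact Relation.ReflTransGen.refl
  | tail _ hst ih =>
    cases hst with
    | step u v l r hm => exact ih.tail (Rew.step u v l r (hsub _ hm))

lemma Rewt_subset {R : List Card} {Sig : List ℕ}
    (hR : ∀ c ∈ R, c.1 ⊆ Sig ∧ c.2 ⊆ Sig) {s t : List ℕ}
    (h : Rewt R s t) (hs : s ⊆ Sig) : t ⊆ Sig := by
  induction h with
  | refl => exact hs
  | tail _ hst ih =>
    cases hst with
    | step u v l r hm =>
      have hsub := ih
      intro a ha
      simp only [List.mem_append] at ha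
      rcases ha with (ha | ha) | ha
      · exact hsub (by simp [ha])
      · exact (hR _ hm).2 ha
      · exact hsub (by simp [ha])

theorem SRH_SR_equi (R : List Card) (x₀ : List ℕ) (a₀ : ℕ) (Sig : List ℕ)
    (hR : ∀ c ∈ R, c.1 ⊆ Sig ∧ c.2 ⊆ Sig) (hx₀ : x₀ ⊆ Sig) (ha₀ : a₀ ∈ Sig)
    (P : List Card)
    (hP : P = R ++ Sig.map (fun a => ([a, a₀], [a₀])) ++ Sig.map (fun a => ([a₀, a], [a₀]))) :
    (∃ y, Rewt R x₀ y ∧ a₀ ∈ y) ↔ Rewt P x₀ [a₀] := by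
  have hRP : ∀ c ∈ R, c ∈ P := by intro c hc; simp [hP, hc]
  have hdelR : ∀ a ∈ Sig, ([a₀, a], ([a₀] : List ℕ)) ∈ P := by
    intro a ha; simp [hP]; tauto
  have hdelL : ∀ a ∈ Sig, ([a, a₀], ([a₀] : List ℕ)) ∈ P := by
    intro a ha; simp [hP]; tauto
  constructor
  · rintro ⟨y, hy, hay⟩
    -- first, collapse to the right of a₀
    have key_right : ∀ v : List ℕ, v ⊆ Sig → Rewt P (a₀ :: v) [a₀] := by
      intro v
      induction v with
      | nil => intro _; exact Relation.ReflTransGen.refl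
      | cons a v' ih =>
        intro hv
        have step1 : Rew P (a₀ :: a :: v') (a₀ :: v') := by
          have := Rew.step ([] : List ℕ) v' [a₀, a] [a₀] (hdelR a (hv (by simp)))
          simpa using this
        exact Relation.ReflTransGen.head step1 (ih (fun b hb => hv (by simp [hb])))
    have key_left : ∀ u : List ℕ, u ⊆ Sig → Rewt P (u ++ [a₀]) [a₀] := by
      intro u
      induction u with
      | nil => intro _; exact Relation.ReflTransGen.refl
      | cons a u' ih =>
        intro hu
        have h1 : Rewt P (a :: (u' ++ [a₀])) (a :: [a₀]) := by
          have := (ih (fun b hb => hu (by simp [hb]))).context [a] []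
          simpa using this
        have h2 : Rew P [a, a₀] [a₀] := by
          have := Rew.step ([] : List ℕ) ([] : List ℕ) [a, a₀] [a₀]
            (hdelL a (hu (by simp)))
          simpa using this
        exact h1.tail h2
    obtain ⟨u, v, rfl⟩ := List.append_of_mem hay
    have hySig : u ++ a₀ :: v ⊆ Sig := Rewt_subset hR hy hx₀
    have h1 : Rewt P x₀ (u ++ a₀ :: v) := Rewt_mono hRP hy
    have h2 : Rewt P (u ++ a₀ :: v) (u ++ [a₀]) := by
      have := (key_right v (fun b hb => hySig (by simp [hb]))).context u []
      simpa using this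
    have h3 : Rewt P (u ++ [a₀]) [a₀] :=
      key_left u (fun b hb => hySig (by simp [hb]))
    exact (h1.trans h2).trans h3
  · intro h
    -- induction backwards
    have main : ∀ x z : List ℕ, Rewt P x z → a₀ ∈ z → ∃ y, Rewt R x y ∧ a₀ ∈ y := by
      intro x z hxz
      induction hxz using Relation.ReflTransGen.head_induction_on with
      | refl => intro hz; exact ⟨z, Relation.ReflTransGen.refl, hz⟩
      | head hstep _ ih =>
        intro hz
        rename_i b c _
        cases hstep with
        | step u v l r hm =>
          rw [hP] at hm
          simp only [List.mem_append, List.mem_map] at hm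
          rcases hm with (hm | ⟨a, ha, heq⟩) | ⟨a, ha, heq⟩
          · obtain ⟨y, hy, hay⟩ := ih hz
            exact ⟨y, Relation.ReflTransGen.head (Rew.step u v l r hm) hy, hay⟩
          · have : a₀ ∈ u ++ l ++ v := by
              have hl : l = [a, a₀] := (Prod.mk.injEq _ _ _ _ ▸ heq).1.symm
              simp [hl]
            exact ⟨u ++ l ++ v, Relation.ReflTransGen.refl, this⟩
          · have : a₀ ∈ u ++ l ++ v := by
              have hl : l = [a₀, a] := (Prod.mk.injEq _ _ _ _ ▸ heq).1.symm
              simp [hl]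
            exact ⟨u ++ l ++ v, Relation.ReflTransGen.refl, this⟩
    exact main x₀ [a₀] h (by simp)
end

section
/- Let Σ cover R, x₀, y₀ and $, # ∉ Σ. Let d := ($, $ ++ x₀ ++ #), e := (y₀ ++ # ++ $, $), and P := {d, e} ∪ R ∪ {#/#} ∪ {[a]/[a] | a ∈ Σ}. If x ⊆ Σ and x ≻*_R y₀, then there exists a stack A ⊆ P with A¹ = x ++ # ++ A². -/
lemma tau1_append (A B : List Card) : tau1 (A ++ B) = tau1 A ++ tau1 B := by
  induction A with
  | nil => rfl
  | cons c A ih => simp [tau1, ih]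

lemma tau2_append (A B : List Card) : tau2 (A ++ B) = tau2 A ++ tau2 B := by
  induction A with
  | nil => rfl
  | cons c A ih => simp [tau2, ih]

lemma tau1_map (u : List ℕ) : tau1 (u.map (fun a => ([a], [a]))) = u := by
  induction u with
  | nil => rfl
  | cons a u ih => simp [tau1, ih]

lemma tau2_map (u : List ℕ) : tau2 (u.map (fun a => ([a], [a]))) = u := by
  induction u with
  | nil => rfl
  | cons a u ih => simp [tau2, ih]

theorem SR_MPCP_trans1 (R : List Card) (x₀ y₀ : List ℕ) (Sig : List ℕ)
    (dol hsh : ℕ)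
    (hR : ∀ c ∈ R, c.1 ⊆ Sig ∧ c.2 ⊆ Sig) (hx₀ : x₀ ⊆ Sig) (hy₀ : y₀ ⊆ Sig)
    (hd : dol ∉ Sig) (hh : hsh ∉ Sig)
    (d e : Card) (P : List Card)
    (hdd : d = ([dol], [dol] ++ x₀ ++ [hsh]))
    (hee : e = (y₀ ++ [hsh] ++ [dol], [dol]))
    (hP : P = [d, e] ++ R ++ [([hsh], [hsh])] ++ Sig.map (fun a => ([a], [a])))
    (x : List ℕ) (hx : x ⊆ Sig) (hxy : Rewt R x y₀) :
    ∃ A : List Card, A ⊆ P ∧ tau1 A = x ++ [hsh] ++ tau2 A := by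
  subst hdd hee hP
  have key : ∀ w : List ℕ, Rewt R w y₀ → w ⊆ Sig →
      ∃ A : List Card, A ⊆ ([([dol], [dol] ++ x₀ ++ [hsh]),
        (y₀ ++ [hsh] ++ [dol], [dol])] ++ R ++ [([hsh], [hsh])] ++
        Sig.map (fun a => ([a], [a]))) ∧ tau1 A = w ++ [hsh] ++ tau2 A := by
    intro w hw
    induction hw using Relation.ReflTransGen.head_induction_on with
    | refl =>
      intro _
      refine ⟨[(y₀ ++ [hsh] ++ [dol], [dol])], ?_, ?_⟩
      · intro c hc; simp at hc; subst hc; simp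
      · simp [tau1, tau2]
    | head hstep _ ih =>
      intro hsub
      obtain ⟨u, v, l, r, hlr⟩ := hstep
      have hu : u ⊆ Sig := fun a ha => hsub (by simp [ha])
      have hv : v ⊆ Sig := fun a ha => hsub (by simp [ha])
      have hr : r ⊆ Sig := (hR _ hlr).2
      have hsub' : u ++ r ++ v ⊆ Sig := by
        intro a ha
        simp only [List.mem_append] at ha
        rcases ha with (h | h) | h
        exacts [hu h, hr h, hv h]
      obtain ⟨A, hA, htau⟩ := ih hsub'
      refine ⟨u.map (fun a => ([a], [a])) ++ [(l, r)] ++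
        v.map (fun a => ([a], [a])) ++ [([hsh], [hsh])] ++ A, ?_, ?_⟩
      · intro c hc
        simp only [List.mem_append, List.mem_map, List.mem_singleton] at hc
        rcases hc with ((((⟨a, ha, rfl⟩ | rfl) | ⟨a, ha, rfl⟩) | rfl) | hc)
        · simp; exact Or.inr (Or.inr (Or.inr (hu ha)))
        · simp [hlr]
        · simp; exact Or.inr (Or.inr (Or.inr (hv ha)))
        · simp
        · exact hA hc
      · simp only [tau1_append, tau2_append, tau1_map, tau2_map, htau]
        simp [tau1, tau2]
  exact key x hxy hx
end

section
/- Every nonempty matching stack B ⊆ P starts with card d, where d := ($ ++ #x₀, $ ++ # ++ y₀#), e := (#::[$], [$]), P := {d,e} ∪ { #x / y# | x/y ∈ x₀/y₀::R, (x,y) ≠ (ε,ε) }, with $, # fresh for the alphabet Σ covering x₀/y₀ and R. -/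
def hashL (h : ℕ) : List ℕ → List ℕ
  | [] => []
  | a :: x => h :: a :: hashL h x

def hashR (h : ℕ) : List ℕ → List ℕ
  | [] => []
  | a :: x => a :: h :: hashR h x

/-! The first symbol of a matching stack is the first symbol of both an upper and a lower string
of its cards. Upper strings of `P` start with `$` or `#`, lower ones with `$` or a letter of `Σ`,
so that symbol is `$`. The first card has it on top, or has an empty top and a lower string
starting with a letter; only `d` fits. -/

theorem exists_head?_fst_eq_of_tau1_eq_cons {B : List Card} {a : ℕ} {l : List ℕ}
    (h : tau1 B = a :: l) : ∃ c ∈ B, c.1.head? = some a := by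
  induction B with
  | nil => simp [tau1] at h
  | cons c B ih =>
    rcases hc : c.1 with _ | ⟨b, u⟩
    · rw [tau1, hc, List.nil_append] at h
      obtain ⟨c', hc', hhead⟩ := ih h
      exact ⟨c', List.mem_cons_of_mem _ hc', hhead⟩
    · rw [tau1, hc, List.cons_append, List.cons.injEq] at h
      exact ⟨c, List.mem_cons_self, by rw [hc, h.1]; rfl⟩

theorem exists_head?_snd_eq_of_tau2_eq_cons {B : List Card} {a : ℕ} {l : List ℕ}
    (h : tau2 B = a :: l) : ∃ c ∈ B, c.2.head? = some a := by
  induction B with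
  | nil => simp [tau2] at h
  | cons c B ih =>
    rcases hc : c.2 with _ | ⟨b, u⟩
    · rw [tau2, hc, List.nil_append] at h
      obtain ⟨c', hc', hhead⟩ := ih h
      exact ⟨c', List.mem_cons_of_mem _ hc', hhead⟩
    · rw [tau2, hc, List.cons_append, List.cons.injEq] at h
      exact ⟨c, List.mem_cons_self, by rw [hc, h.1]; rfl⟩

theorem eq_of_mem_head?_hashL {h a : ℕ} {x : List ℕ} (ha : a ∈ (hashL h x).head?) : a = h := by
  cases x <;> simp_all [hashL]

theorem head?_hashR (h : ℕ) (y : List ℕ) : (hashR h y).head? = y.head? := by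
  cases y <;> rfl

/-- The card set `P` of the statement. -/
def mpcpToPcpCards (x₀ y₀ : List ℕ) (R : List Card) (dol hsh : ℕ) : List Card :=
  [(dol :: hashL hsh x₀, dol :: hsh :: hashR hsh y₀), ([hsh, dol], [dol])] ++
    ((((x₀, y₀) :: R).filter (fun c => c ≠ (([] : List ℕ), ([] : List ℕ)))).map
      (fun c => (hashL hsh c.1, hashR hsh c.2)))

section Cards

variable {x₀ y₀ : List ℕ} {R : List Card} {dol hsh : ℕ} {c : Card}

theorem mem_mpcpToPcpCards :
    c ∈ mpcpToPcpCards x₀ y₀ R dol hsh ↔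
      c = (dol :: hashL hsh x₀, dol :: hsh :: hashR hsh y₀) ∨ c = ([hsh, dol], [dol]) ∨
        ∃ x y, (x, y) ∈ (x₀, y₀) :: R ∧ (x, y) ≠ ([], []) ∧ c = (hashL hsh x, hashR hsh y) := by
  simp only [mpcpToPcpCards, List.cons_append, List.nil_append, List.mem_cons, List.mem_map,
    List.mem_filter, decide_eq_true_eq, Prod.exists]
  grind

theorem upper_head_of_mem_mpcpToPcpCards (hc : c ∈ mpcpToPcpCards x₀ y₀ R dol hsh) {a : ℕ}
    (ha : a ∈ c.1.head?) : a = dol ∨ a = hsh := by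
  rcases mem_mpcpToPcpCards.1 hc with rfl | rfl | ⟨x, y, -, -, rfl⟩
  · simp_all
  · simp_all
  · exact Or.inr (eq_of_mem_head?_hashL ha)

theorem lower_head_of_mem_mpcpToPcpCards {Sig : List ℕ}
    (hR : ∀ c ∈ ((x₀, y₀) :: R), c.2 ⊆ Sig)
    (hc : c ∈ mpcpToPcpCards x₀ y₀ R dol hsh) {a : ℕ} (ha : a ∈ c.2.head?) :
    a = dol ∨ a ∈ Sig := by
  rcases mem_mpcpToPcpCards.1 hc with rfl | rfl | ⟨x, y, hxy, -, rfl⟩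
  · simp_all
  · simp_all
  · rw [head?_hashR] at ha
    exact Or.inr (hR _ hxy (List.mem_of_mem_head? ha))

theorem mem_mpcpToPcpCards_cases {Sig : List ℕ}
    (hR : ∀ c ∈ ((x₀, y₀) :: R), c.2 ⊆ Sig)
    (hc : c ∈ mpcpToPcpCards x₀ y₀ R dol hsh) :
    c = (dol :: hashL hsh x₀, dol :: hsh :: hashR hsh y₀) ∨ (∃ u, c.1 = hsh :: u) ∨
      (c.1 = [] ∧ ∃ s ∈ Sig, ∃ v, c.2 = s :: v) := by
  rcases mem_mpcpToPcpCards.1 hc with rfl | rfl | ⟨x, y, hxy, hne, rfl⟩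
  · exact Or.inl rfl
  · exact Or.inr (Or.inl ⟨_, rfl⟩)
  · right
    rcases x with _ | ⟨a, x⟩
    · rcases y with _ | ⟨b, y⟩
      · exact absurd rfl hne
      · exact Or.inr ⟨rfl, b, hR _ hxy List.mem_cons_self, _, rfl⟩
    · exact Or.inl ⟨_, rfl⟩

end Cards

theorem match_start (x₀ y₀ : List ℕ) (R : List Card) (Sig : List ℕ) (dol hsh : ℕ)
    (hR : ∀ c ∈ ((x₀, y₀) :: R), c.1 ⊆ Sig ∧ c.2 ⊆ Sig)
    (hd : dol ∉ Sig) (hh : hsh ∉ Sig) (hne : dol ≠ hsh)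
    (d e : Card) (P : List Card)
    (hdd : d = (dol :: hashL hsh x₀, dol :: hsh :: hashR hsh y₀))
    (hee : e = ([hsh, dol], [dol]))
    (hP : P = [d, e] ++
      ((((x₀, y₀) :: R).filter (fun c => c ≠ (([] : List ℕ), ([] : List ℕ)))).map
        (fun c => (hashL hsh c.1, hashR hsh c.2))))
    (B : List Card) (hB : B ⊆ P) (hBne : B ≠ []) (hmatch : tau1 B = tau2 B) :
    ∃ B', B = d :: B' := by
  subst hdd hee hP
  have hlower : ∀ c ∈ (x₀, y₀) :: R, c.2 ⊆ Sig := fun c hc => (hR c hc).2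
  obtain ⟨c, B', rfl⟩ := List.exists_cons_of_ne_nil hBne
  rcases mem_mpcpToPcpCards_cases hlower (hB List.mem_cons_self) with
    rfl | ⟨u, hc⟩ | ⟨hc, s, hs, v, hc'⟩
  · exact ⟨B', rfl⟩
  · have hlow : tau2 (c :: B') = hsh :: (u ++ tau1 B') := by rw [← hmatch, tau1, hc]; rfl
    obtain ⟨c', hc', hhead⟩ := exists_head?_snd_eq_of_tau2_eq_cons hlow
    rcases lower_head_of_mem_mpcpToPcpCards hlower (hB hc') (Option.mem_def.2 hhead) with h | h
    · exact absurd h.symm hne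
    · exact absurd h hh
  · have hup : tau1 (c :: B') = s :: (v ++ tau2 B') := by rw [hmatch, tau2, hc']; rfl
    obtain ⟨c', hc', hhead⟩ := exists_head?_fst_eq_of_tau1_eq_cons hup
    rcases upper_head_of_mem_mpcpToPcpCards (hB hc') (Option.mem_def.2 hhead) with rfl | rfl
    · exact absurd hs hd
    · exact absurd hs hh
end

section
/- PCP reduces to CFP: for a list of cards P and a symbol # not occurring in P, there exists a nonempty match A ⊆ P (A¹ = A²) if and only if there exists a nonempty A ⊆ γP with σ_#A a palindrome, where γP := [ x / reverse y | x/y ∈ P ]. -/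
def sigma (a : ℕ) : List Card → List ℕ
  | [] => [a]
  | c :: A => c.1 ++ sigma a A ++ c.2

def reverseLower (c : Card) : Card := (c.1, c.2.reverse)

lemma reverseLower_involutive : Function.Involutive reverseLower := fun c => by
  simp [reverseLower]

lemma tau1_eq_flatten (A : List Card) : tau1 A = (A.map Prod.fst).flatten := by
  induction A with
  | nil => rfl
  | cons c A ih => simp [tau1, ih]

lemma tau2_eq_flatten (A : List Card) : tau2 A = (A.map Prod.snd).flatten := by
  induction A with
  | nil => rfl
  | cons c A ih => simp [tau2, ih]

lemma notMem_tau_of_subset {a : ℕ} {P A : List Card} (hP : ∀ c ∈ P, a ∉ c.1 ∧ a ∉ c.2)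
    (hA : A ⊆ P) : a ∉ tau1 A ∧ a ∉ tau2 A := by
  simp only [tau1_eq_flatten, tau2_eq_flatten, List.mem_flatten, List.mem_map]
  exact ⟨fun ⟨_, ⟨c, hc, hl⟩, h⟩ => (hP c (hA hc)).1 (hl ▸ h),
    fun ⟨_, ⟨c, hc, hl⟩, h⟩ => (hP c (hA hc)).2 (hl ▸ h)⟩

lemma sigma_map_reverseLower (a : ℕ) (A : List Card) :
    sigma a (A.map reverseLower) = tau1 A ++ a :: (tau2 A).reverse := by
  induction A with
  | nil => rfl
  | cons c A ih => simp [sigma, tau1, tau2, reverseLower, ih]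

lemma sigma_map_reverseLower_palindrome_iff {a : ℕ} {A : List Card}
    (h1 : a ∉ tau1 A) (h2 : a ∉ tau2 A) :
    sigma a (A.map reverseLower) = (sigma a (A.map reverseLower)).reverse ↔ tau1 A = tau2 A := by
  have h2' : a ∉ (tau2 A).reverse := List.mem_reverse.not.mpr h2
  simp only [sigma_map_reverseLower, List.reverse_append, List.reverse_cons, List.reverse_reverse,
    List.append_assoc, List.singleton_append, List.append_cons_inj_of_notMem h1 h2']
  exact ⟨fun h => h.1, fun h => ⟨h, trivial, h ▸ rfl⟩⟩

theorem PCP_CFP (P : List Card) (hash : ℕ)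
    (hh : ∀ c ∈ P, hash ∉ c.1 ∧ hash ∉ c.2) :
    (∃ A : List Card, A ⊆ P ∧ A ≠ [] ∧ tau1 A = tau2 A) ↔
      (∃ A : List Card, A ⊆ P.map (fun c => (c.1, c.2.reverse)) ∧ A ≠ [] ∧
        sigma hash A = (sigma hash A).reverse) := by
  change _ ↔ ∃ A, A ⊆ P.map reverseLower ∧ _
  have map_subset_iff {A : List Card} : A.map reverseLower ⊆ P.map reverseLower ↔ A ⊆ P :=
    List.map_subset_iff _ reverseLower_involutive.injective
  constructor
  · rintro ⟨A, hAP, hne, heq⟩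
    obtain ⟨h1, h2⟩ := notMem_tau_of_subset hh hAP
    exact ⟨A.map reverseLower, map_subset_iff.mpr hAP, by simpa using hne,
      (sigma_map_reverseLower_palindrome_iff h1 h2).mpr heq⟩
  · rintro ⟨B, hBP, hne, hpal⟩
    obtain ⟨A, rfl⟩ : ∃ A, B = A.map reverseLower :=
      ⟨B.map reverseLower, by simp [List.map_map, reverseLower_involutive.comp_self]⟩
    have hAP := map_subset_iff.mp hBP
    obtain ⟨h1, h2⟩ := notMem_tau_of_subset hh hAP
    exact ⟨A, hAP, by simpa using hne, (sigma_map_reverseLower_palindrome_iff h1 h2).mp hpal⟩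
end
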